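/- arXiv:1611.08140 — 2 statements merged into one kernel-verified Lean document; each statement's English description precedes it below -/
import Mathlib

section
/- Let κ be an uncountable regular cardinal. Then add(𝓜_κ) ≥ min{𝔟_κ, cov(𝓜_κ)}. -/
namespace GenCichon

noncomputable section

open Cardinal Set Ordinal

variable (κ : Cardinal.{0})

/-- The ordinals below `κ`, i.e. the cardinal `κ` viewed as a set of ordinals. -/
abbrev Idx : Type 1 := ↥(Set.Iio κ.ord)

/-- The generalized Cantor space `2^κ`. -/
abbrev GenCantor : Type 1 := Idx κ → Bool

/-- The generalized Baire space `κ^κ`. -/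
abbrev GenBaire : Type 1 := Idx κ → Idx κ

/-- The basic open (cylinder) set `[σ]` determined by the element `σ` of `2^{<κ}`
with domain `[0, δ)` (values of `σ` at or above `δ` are irrelevant). -/
def cyl (δ : Ordinal) (σ : Ordinal → Bool) : Set (GenCantor κ) :=
  { x | ∀ β : Idx κ, β.1 < δ → x β = σ β.1 }

/-- `A ⊆ 2^κ` is nowhere dense: every basic open set `[σ]`, `σ ∈ 2^{<κ}`, has a
basic open refinement `[σ'] ⊆ [σ]` disjoint from `A`. -/
def IsNwd (A : Set (GenCantor κ)) : Prop :=
  ∀ δ < κ.ord, ∀ σ : Ordinal → Bool, ∃ δ', δ ≤ δ' ∧ δ' < κ.ord ∧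
    ∃ σ' : Ordinal → Bool, (∀ β < δ, σ' β = σ β) ∧ cyl κ δ' σ' ∩ A = ∅

/-- `A ⊆ 2^κ` is `κ`-meager: a union of `κ` many nowhere dense sets. -/
def IsKMeager (A : Set (GenCantor κ)) : Prop :=
  ∃ B : Idx κ → Set (GenCantor κ), (∀ i, IsNwd κ (B i)) ∧ A = ⋃ i, B i

/-- The covering number of the `κ`-meager ideal. -/
def covM : Cardinal.{1} :=
  sInf { c : Cardinal.{1} | ∃ J : Set (Set (GenCantor κ)),
    (∀ A ∈ J, IsKMeager κ A) ∧ ⋃₀ J = Set.univ ∧ c = #J }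

/-- The uniformity number of the `κ`-meager ideal. -/
def nonM : Cardinal.{1} :=
  sInf { c : Cardinal.{1} | ∃ X : Set (GenCantor κ), ¬ IsKMeager κ X ∧ c = #X }

/-- The additivity number of the `κ`-meager ideal. -/
def addM : Cardinal.{1} :=
  sInf { c : Cardinal.{1} | ∃ J : Set (Set (GenCantor κ)),
    (∀ A ∈ J, IsKMeager κ A) ∧ ¬ IsKMeager κ (⋃₀ J) ∧ c = #J }

/-- The cofinality number of the `κ`-meager ideal. -/
def cofM : Cardinal.{1} :=
  sInf { c : Cardinal.{1} | ∃ J : Set (Set (GenCantor κ)),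
    (∀ A ∈ J, IsKMeager κ A) ∧ (∀ A, IsKMeager κ A → ∃ B ∈ J, A ⊆ B) ∧ c = #J }

/-- `g` eventually dominates `f` (`f <* g`). -/
def EvDom (f g : GenBaire κ) : Prop :=
  ∃ α : Idx κ, ∀ β : Idx κ, α < β → f β < g β

/-- The unbounding number `𝔟_κ`. -/
def bK : Cardinal.{1} :=
  sInf { c : Cardinal.{1} | ∃ F : Set (GenBaire κ),
    (∀ g : GenBaire κ, ∃ f ∈ F, ¬ EvDom κ f g) ∧ c = #F }

/-- The dominating number `𝔡_κ`. -/
def dK : Cardinal.{1} :=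
  sInf { c : Cardinal.{1} | ∃ F : Set (GenBaire κ),
    (∀ g : GenBaire κ, ∃ f ∈ F, EvDom κ g f) ∧ c = #F }

/-- `f` and `g` are eventually different (`f ≠* g`). -/
def EvDiff (f g : GenBaire κ) : Prop :=
  #{ α : Idx κ | f α = g α } < Cardinal.lift.{1} κ

/-- `𝔟_κ(≠*)`: least size of a family such that every `g` is cofinally matching
with some member of it. -/
def bNeq : Cardinal.{1} :=
  sInf { c : Cardinal.{1} | ∃ F : Set (GenBaire κ),
    (∀ g : GenBaire κ, ∃ f ∈ F, ¬ EvDiff κ f g) ∧ c = #F }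

/-- `𝔡_κ(≠*)`: least size of a family such that every `g` is eventually different
from some member of it. -/
def dNeq : Cardinal.{1} :=
  sInf { c : Cardinal.{1} | ∃ F : Set (GenBaire κ),
    (∀ g : GenBaire κ, ∃ f ∈ F, EvDiff κ f g) ∧ c = #F }

/-- An interval partition of `κ`: a strictly increasing continuous sequence
`(pts α : α < κ)` of ordinals below `κ` with `pts 0 = 0`; the `α`-th interval is
`[pts α, pts (α+1))`.  (Values at or above `κ` are normalized to `0`, so that an
interval partition is determined by its restriction below `κ`.) -/
structure IntervalPartition where
  pts : Ordinal → Ordinal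
  zero : pts 0 = 0
  lt_ord : ∀ α < κ.ord, pts α < κ.ord
  strictMono : ∀ α β : Ordinal, α < β → β < κ.ord → pts α < pts β
  isCont : ∀ δ < κ.ord, Order.IsSuccLimit δ → pts δ = ⨆ β : ↥(Set.Iio δ), pts β.1
  eq_zero_of_le : ∀ α, κ.ord ≤ α → pts α = 0

/-- The `β`-th interval of `J` is included in the `α`-th interval of `I`. -/
def SubIntv (J : IntervalPartition κ) (β : Ordinal) (I : IntervalPartition κ)
    (α : Ordinal) : Prop :=
  I.pts α ≤ J.pts β ∧ J.pts (β + 1) ≤ I.pts (α + 1)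

/-- `I` dominates `J` (`J ≤* I`): from some point on, every interval of `I`
contains an interval of `J`. -/
def IPDom (J I : IntervalPartition κ) : Prop :=
  ∃ γ < κ.ord, ∀ α, γ < α → α < κ.ord → ∃ β < κ.ord, SubIntv κ J β I α

/-- `y` matches the `κ`-chopped function `(x, I)`: `y` and `x` agree on cofinally
many intervals of `I`. -/
def Matches (y x : GenCantor κ) (I : IntervalPartition κ) : Prop :=
  ∀ γ < κ.ord, ∃ α, γ ≤ α ∧ α < κ.ord ∧
    ∀ β : Idx κ, I.pts α ≤ β.1 → β.1 < I.pts (α + 1) → y β = x β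

/-- The set of elements of `2^κ` matching the `κ`-chopped function `(x, I)`. -/
def MatchSet (x : GenCantor κ) (I : IntervalPartition κ) : Set (GenCantor κ) :=
  { y | Matches κ y x I }

/-- `h ∈ κ^κ` tends to `κ`: `lim_{α → κ} h(α) = κ`. -/
def TendsToTop (h : GenBaire κ) : Prop :=
  ∀ γ : Idx κ, ∃ α : Idx κ, ∀ β : Idx κ, α ≤ β → γ ≤ h β

/-- `φ` is an `h`-slalom: `φ(α)` is a subset of `κ` of cardinality `|h(α)|`. -/
def IsSlalom (h : GenBaire κ) (φ : Idx κ → Set (Idx κ)) : Prop :=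
  ∀ α : Idx κ, #(φ α) = Cardinal.lift.{1} (h α).1.card

/-- The (total) slalom `φ` localizes `f` (`f ∈* φ`). -/
def Localizes (φ : Idx κ → Set (Idx κ)) (f : GenBaire κ) : Prop :=
  #{ α : Idx κ | f α ∉ φ α } < Cardinal.lift.{1} κ

/-- `𝔟_h(∈*)`. -/
def bLoc (h : GenBaire κ) : Cardinal.{1} :=
  sInf { c : Cardinal.{1} | ∃ F : Set (GenBaire κ),
    (∀ φ : Idx κ → Set (Idx κ), IsSlalom κ h φ → ∃ f ∈ F, ¬ Localizes κ φ f) ∧ c = #F }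

/-- `𝔡_h(∈*)`. -/
def dLoc (h : GenBaire κ) : Cardinal.{1} :=
  sInf { c : Cardinal.{1} | ∃ Φ : Set (Idx κ → Set (Idx κ)),
    (∀ φ ∈ Φ, IsSlalom κ h φ) ∧ (∀ f : GenBaire κ, ∃ φ ∈ Φ, Localizes κ φ f) ∧ c = #Φ }

/-- A partial `h`-slalom: a slalom whose domain is a subset of `κ` of cardinality `κ`.
(The values outside the domain are normalized to `∅`.) -/
structure PartialSlalom (h : GenBaire κ) where
  dom : Set (Idx κ)
  dom_card : #dom = Cardinal.lift.{1} κ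
  fn : Idx κ → Set (Idx κ)
  fn_card : ∀ α ∈ dom, #(fn α) = Cardinal.lift.{1} (h α).1.card
  eq_empty_of_not_mem : ∀ α ∉ dom, fn α = ∅

/-- The partial slalom `φ` localizes `f` (`f ∈* φ`). -/
def PLocalizes {h : GenBaire κ} (φ : PartialSlalom κ h) (f : GenBaire κ) : Prop :=
  #{ α : Idx κ | α ∈ φ.dom ∧ f α ∉ φ.fn α } < Cardinal.lift.{1} κ

/-- `𝔟_h(p∈*)`. -/
def bPLoc (h : GenBaire κ) : Cardinal.{1} :=
  sInf { c : Cardinal.{1} | ∃ F : Set (GenBaire κ),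
    (∀ φ : PartialSlalom κ h, ∃ f ∈ F, ¬ PLocalizes κ φ f) ∧ c = #F }

/-- `𝔡_h(p∈*)`. -/
def dPLoc (h : GenBaire κ) : Cardinal.{1} :=
  sInf { c : Cardinal.{1} | ∃ Φ : Set (PartialSlalom κ h),
    (∀ f : GenBaire κ, ∃ φ ∈ Φ, PLocalizes κ φ f) ∧ c = #Φ }

/-- `X ⊆ 2^κ` is open in the `<κ`-box topology. -/
def IsOpenK (X : Set (GenCantor κ)) : Prop :=
  ∀ x ∈ X, ∃ δ < κ.ord, { y : GenCantor κ | ∀ β : Idx κ, β.1 < δ → y β = x β } ⊆ X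

/-- `X ⊆ 2^κ` is dense: it meets every basic open set. -/
def IsDenseK (X : Set (GenCantor κ)) : Prop :=
  ∀ δ < κ.ord, ∀ σ : Ordinal → Bool, (cyl κ δ σ ∩ X).Nonempty

/-- Coordinatewise addition modulo 2 on `2^κ`. -/
def addMod2 (x y : GenCantor κ) : GenCantor κ := fun α => Bool.xor (x α) (y α)

/-- The identification of `σ ∈ 2^{<κ}` (with domain `[0, δ)`) with the element of
`2^κ` extending `σ` by `0`'s. -/
def extendZero (δ : Ordinal) (σ : Ordinal → Bool) : GenCantor κ :=
  fun α => if α.1 < δ then σ α.1 else false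

end

end GenCichon

namespace GenCichon

open Cardinal Set Ordinal

/-!
The Baire category theorem (a fusion of `κ` extensions, using regularity at limit stages) shows
that the union of all singletons is not `κ`-meager, so `addM κ` is an infimum over a nonempty set.

Let `J` be a family of fewer than `min 𝔟_κ cov(𝓜_κ)` meager sets `A = ⋃ᵢ N_{A,i}`.
If some level `2^δ`, `δ < κ`, has more than `κ` nodes, then `cov(𝓜_κ) ≤ κ⁺`, so `|J| ≤ κ` and
`⋃ J` is meager. Otherwise list `2^{<κ}` in type `κ`, each node `p` with each label `i`
cofinally often. Fewer than `cov(𝓜_κ)` meager sets miss some `z` such that for all `A`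
and all positions `η`, the node `p_η` continued by `z` up to some height `q_A(η) < κ` avoids
`N_{A,i_η}`. A single `g` dominating all `q_A` shows that `⋃ J` is covered by the `κ` nowhere dense
sets `{y | y avoids p_η continued by z up to g(η), for all η > ξ with label i}`.
-/

section Conditions

/-- The binary sequence `val ↾ len`; the values `val β` for `β ≥ len` are junk. -/
structure Cond where
  len : Ordinal.{0}
  val : Ordinal.{0} → Bool

namespace Cond

instance : Preorder Cond where
  le p q := p.len ≤ q.len ∧ ∀ β < p.len, q.val β = p.val β
  le_refl _ := ⟨le_rfl, fun _ _ => rfl⟩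
  le_trans _ _ _ hpq hqr :=
    ⟨hpq.1.trans hqr.1, fun β hβ => (hqr.2 β (hβ.trans_le hpq.1)).trans (hpq.2 β hβ)⟩

variable (κ : Cardinal.{0})

abbrev cylinder (p : Cond) : Set (GenCantor κ) := cyl κ p.len p.val

variable {κ}

lemma cylinder_anti : Antitone (cylinder κ) := fun _ _ hpq _ hx β hβ =>
  (hx β (hβ.trans_le hpq.1)).trans (hpq.2 β hβ)

open Classical in
noncomputable def glue {ι : Type*} (c : ι → Cond) : Cond where
  len := ⨆ i, (c i).len
  val β := if h : ∃ i, β < (c i).len then (c h.choose).val β else false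

lemma le_glue {ι : Type*} [Preorder ι] [IsDirected ι (· ≤ ·)] {c : ι → Cond} (hc : Monotone c)
    (hbdd : BddAbove (range fun i => (c i).len)) (i : ι) : c i ≤ glue c := by
  refine ⟨le_ciSup hbdd i, fun β hβ => ?_⟩
  have h : ∃ i, β < (c i).len := ⟨i, hβ⟩
  obtain ⟨k, hik, hjk⟩ := directed_of (· ≤ ·) i h.choose
  simp only [glue, dif_pos h]
  rw [← (hc hjk).2 β h.choose_spec, (hc hik).2 β hβ]

open Classical in
noncomputable def avoid (N : Set (GenCantor κ)) (p : Cond) : Cond :=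
  if h : ∃ q, p ≤ q ∧ q.len < κ.ord ∧ q.cylinder κ ∩ N = ∅ then h.choose else p

end Cond

open Cond

variable {κ : Cardinal.{0}}

lemma isNwd_iff {A : Set (GenCantor κ)} :
    IsNwd κ A ↔ ∀ p : Cond, p.len < κ.ord →
      ∃ q, p ≤ q ∧ q.len < κ.ord ∧ q.cylinder κ ∩ A = ∅ := by
  refine ⟨fun h p hp => ?_, fun h δ hδ σ => ?_⟩
  · obtain ⟨δ', hδδ', hδ', σ', hσ', hA⟩ := h p.len hp p.val
    exact ⟨⟨δ', σ'⟩, ⟨hδδ', hσ'⟩, hδ', hA⟩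
  · obtain ⟨q, hpq, hq, hA⟩ := h ⟨δ, σ⟩ hδ
    exact ⟨q.len, hpq.1, hq, q.val, hpq.2, hA⟩

lemma Cond.avoid_spec {N : Set (GenCantor κ)} (hN : IsNwd κ N) {p : Cond} (hp : p.len < κ.ord) :
    p ≤ avoid N p ∧ (avoid N p).len < κ.ord ∧ (avoid N p).cylinder κ ∩ N = ∅ := by
  have h := isNwd_iff.1 hN p hp
  rw [avoid, dif_pos h]
  exact h.choose_spec

end Conditions

section Meager

variable {κ : Cardinal.{0}}

lemma mk_idx : #(Idx κ) = lift κ := by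
  rw [Cardinal.mk_Iio_ordinal, card_ord]

lemma mk_prod_idx_le (hκ : ℵ₀ ≤ κ) {α : Type 1} (hα : #α ≤ lift κ) :
    #(α × Idx κ) ≤ lift κ := by
  simp only [mk_prod, Cardinal.lift_id, mk_idx]
  exact (mul_le_mul' hα le_rfl).trans (mul_eq_self (aleph0_le_lift.2 hκ)).le

lemma isNwd_empty : IsNwd κ ∅ := fun δ hδ σ =>
  ⟨δ, le_rfl, hδ, σ, fun _ _ => rfl, inter_empty _⟩

lemma IsNwd.mono {A B : Set (GenCantor κ)} (hAB : A ⊆ B) (hB : IsNwd κ B) : IsNwd κ A := by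
  intro δ hδ σ
  obtain ⟨δ', hδδ', hδ', σ', hσ', hB⟩ := hB δ hδ σ
  exact ⟨δ', hδδ', hδ', σ', hσ', subset_empty_iff.1 (hB ▸ inter_subset_inter_right _ hAB)⟩

lemma isNwd_singleton (hκ : ℵ₀ ≤ κ) (x : GenCantor κ) : IsNwd κ {x} := by
  refine isNwd_iff.2 fun p hp => ⟨⟨p.len + 1, fun β => if β = p.len then !x ⟨p.len, hp⟩
    else p.val β⟩, ⟨le_self_add, fun β hβ => if_neg hβ.ne⟩, ?_, ?_⟩
  · exact (isSuccLimit_ord hκ).succ_lt hp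
  · refine eq_empty_of_forall_notMem fun y ⟨hy, hyx⟩ => ?_
    rw [mem_singleton_iff.1 hyx] at hy
    simpa using hy ⟨p.len, hp⟩ (Order.lt_succ p.len)

lemma isKMeager_of_subset_iUnion {ι : Type 1} (hι : #ι ≤ lift κ) {E : ι → Set (GenCantor κ)}
    (hE : ∀ i, IsNwd κ (E i)) {S : Set (GenCantor κ)} (hS : S ⊆ ⋃ i, E i) :
    IsKMeager κ S := by
  obtain ⟨f⟩ : Nonempty (ι ↪ Idx κ) := by
    rwa [← Cardinal.le_def, mk_idx]
  refine ⟨fun η => Function.extend f E (fun _ => ∅) η ∩ S, fun η => ?_, ?_⟩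
  · by_cases h : ∃ i, f i = η
    · obtain ⟨i, rfl⟩ := h
      exact (hE i).mono (f.injective.extend_apply E _ i ▸ inter_subset_left)
    · refine isNwd_empty.mono ?_
      dsimp only
      rw [Function.extend_apply' E _ η h]
      exact inter_subset_left
  · refine (subset_antisymm (fun y hy => ?_) (iUnion_subset fun _ => inter_subset_right))
    obtain ⟨i, hi⟩ := mem_iUnion.1 (hS hy)
    exact mem_iUnion.2 ⟨f i, by rwa [f.injective.extend_apply], hy⟩

lemma IsNwd.isKMeager (hκ : ℵ₀ ≤ κ) {A : Set (GenCantor κ)} (hA : IsNwd κ A) : IsKMeager κ A :=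
  isKMeager_of_subset_iUnion (ι := PUnit) (by simpa using one_le_aleph0.trans hκ)
    (fun _ => hA) (subset_iUnion (fun _ => A) PUnit.unit)

lemma isKMeager_sUnion_of_mk_le (hκ : ℵ₀ ≤ κ) {J : Set (Set (GenCantor κ))}
    (hJ : ∀ A ∈ J, IsKMeager κ A) (hJκ : #J ≤ lift κ) : IsKMeager κ (⋃₀ J) := by
  choose N hN hJN using fun A : J => hJ A A.2
  refine isKMeager_of_subset_iUnion (E := fun p : J × Idx κ => N p.1 p.2)
    (mk_prod_idx_le hκ hJκ) (fun p => hN p.1 p.2) fun y ⟨A, hA, hy⟩ => ?_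
  obtain ⟨i, hi⟩ := mem_iUnion.1 ((hJN ⟨A, hA⟩).subst (motive := (y ∈ ·)) hy)
  exact mem_iUnion.2 ⟨(⟨A, hA⟩, i), hi⟩

lemma covM_le_mk {ι : Type 1} {M : ι → Set (GenCantor κ)} (hM : ∀ i, IsKMeager κ (M i))
    (hcov : ⋃ i, M i = Set.univ) : covM κ ≤ #ι := by
  refine (csInf_le' ?_).trans (mk_range_le (f := M))
  exact ⟨range M, forall_mem_range.2 hM, by rwa [sUnion_range], rfl⟩

lemma exists_forall_notMem_of_mk_lt_covM {ι : Type 1} {M : ι → Set (GenCantor κ)}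
    (hM : ∀ i, IsKMeager κ (M i)) (hι : #ι < covM κ) : ∃ z, ∀ i, z ∉ M i := by
  by_contra! h
  exact (covM_le_mk hM (eq_univ_of_forall fun z => mem_iUnion.2 (h z))).not_gt hι

lemma exists_forall_evDom_of_mk_lt_bK {ι : Type 1} (f : ι → GenBaire κ) (hι : #ι < bK κ) :
    ∃ g, ∀ i, EvDom κ (f i) g := by
  by_contra! h
  refine ((csInf_le' ?_).trans (mk_range_le (f := f))).not_gt hι
  refine ⟨range f, fun g => ?_, rfl⟩
  obtain ⟨i, hi⟩ := h g
  exact ⟨f i, mem_range_self i, hi⟩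

end Meager

section Baire

open Cond

variable {κ : Cardinal.{0}}

lemma mk_Iio_lt (i : Idx κ) : #(Iio i) < lift κ := by
  have hinj : Function.Injective fun j : Iio i => (⟨j.1.1, j.2⟩ : Iio i.1) := fun j j' h =>
    Subtype.ext (Subtype.ext (congrArg Subtype.val h :))
  refine (mk_le_of_injective hinj).trans_lt ?_
  rw [Cardinal.mk_Iio_ordinal, Cardinal.lift_lt]
  exact lt_ord.1 i.2

noncomputable def bairePath (B : Idx κ → Set (GenCantor κ)) : Idx κ → Cond :=
  WellFoundedLT.fix fun i path => avoid (B i) (glue fun j : Iio i => path j j.2)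

lemma bairePath_eq (B : Idx κ → Set (GenCantor κ)) (i : Idx κ) :
    bairePath B i = avoid (B i) (glue fun j : Iio i => bairePath B j) :=
  WellFoundedLT.fix_eq _ i

lemma bairePath_spec (hreg : κ.IsRegular) {B : Idx κ → Set (GenCantor κ)}
    (hB : ∀ i, IsNwd κ (B i)) (i : Idx κ) :
    (bairePath B i).len < κ.ord ∧ (∀ j < i, bairePath B j ≤ bairePath B i) ∧
      (bairePath B i).cylinder κ ∩ B i = ∅ := by
  induction i using WellFoundedLT.induction with
  | _ i ih =>
    have hc : Monotone fun j : Iio i => bairePath B j :=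
      monotone_iff_forall_lt.2 fun j j' h => (ih j' j'.2).2.1 j h
    have hlen : (glue fun j : Iio i => bairePath B j).len < κ.ord := by
      refine Ordinal.lift_iSup_lt_of_lt_cof ?_ fun j => (ih j j.2).1
      rw [← lift_cof, hreg.cof_ord, Cardinal.lift_uzero]
      exact mk_Iio_lt i
    have hle := le_glue hc ⟨κ.ord, forall_mem_range.2 fun j => (ih j j.2).1.le⟩
    obtain ⟨h_le, h_len, h_avoid⟩ := avoid_spec (hB i) hlen
    rw [bairePath_eq]
    exact ⟨h_len, fun j hj => (hle ⟨j, hj⟩).trans h_le, h_avoid⟩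

theorem not_isKMeager_univ (hreg : κ.IsRegular) : ¬ IsKMeager κ (Set.univ : Set (GenCantor κ)) := by
  rintro ⟨B, hB, hU⟩
  have hspec := bairePath_spec hreg hB
  have hmono : Monotone (bairePath B) := monotone_iff_forall_lt.2 fun j i h => (hspec i).2.1 j h
  let x : GenCantor κ := fun β => (glue (bairePath B)).val β
  obtain ⟨i, hi⟩ := mem_iUnion.1 (hU ▸ mem_univ x)
  have hx : x ∈ (bairePath B i).cylinder κ :=
    cylinder_anti (le_glue hmono ⟨κ.ord, forall_mem_range.2 fun j => (hspec j).1.le⟩ i)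
      fun _ _ => rfl
  exact (hspec i).2.2.subset ⟨hx, hi⟩

end Baire

section LargeLevels

variable {κ : Cardinal.{0}}

/-- The bound `h` is automatic for `α, δ < κ.ord`, as `κ.ord` is additively principal. -/
def ShowsAt (x : GenCantor κ) (α : Ordinal) {δ : Ordinal} (w : Iio δ → Bool) : Prop :=
  ∀ j : Iio δ, ∀ h : α + j.1 < κ.ord, x ⟨α + j.1, h⟩ = w j

lemma isNwd_setOf_forall_not_showsAt (hκ : ℵ₀ ≤ κ) {δ : Ordinal} (hδ : δ < κ.ord)
    (w : Iio δ → Bool) : IsNwd κ {x | ∀ α < κ.ord, ¬ ShowsAt x α w} := by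
  refine isNwd_iff.2 fun p hp => ⟨⟨p.len + δ, fun β => if h : β < p.len then p.val β
      else if h' : β - p.len < δ then w ⟨β - p.len, h'⟩ else false⟩,
    ⟨le_self_add, fun β hβ => dif_pos hβ⟩, isPrincipal_add_ord hκ hp hδ, ?_⟩
  refine eq_empty_of_forall_notMem fun x ⟨hx, hxw⟩ => hxw p.len hp fun j h => ?_
  simpa [show j.1 < δ from j.2] using hx ⟨_, h⟩ (add_lt_add_right j.2 _)

lemma mk_setOf_showsAt_le (hκ : ℵ₀ ≤ κ) (x : GenCantor κ) {δ : Ordinal} (hδ : δ < κ.ord) :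
    #{w : Iio δ → Bool | ∃ α < κ.ord, ShowsAt x α w} ≤ lift κ := by
  choose pos hpos_lt hpos using fun w : {w : Iio δ → Bool | ∃ α < κ.ord, ShowsAt x α w} => w.2
  refine mk_idx ▸ mk_le_of_injective (f := fun w => (⟨pos w, hpos_lt w⟩ : Idx κ)) fun w w' h => ?_
  have h : pos w = pos w' := congrArg Subtype.val h
  refine Subtype.ext (funext fun j => ?_)
  have hj : pos w + j.1 < κ.ord := isPrincipal_add_ord hκ (hpos_lt w) (j.2.trans hδ)
  rw [← hpos w j hj, ← hpos w' j (h ▸ hj)]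
  exact congrArg x (Subtype.ext (congrArg (· + j.1) h))

/-- Each `x` shows at most `κ` of the words of length `δ`, so any `κ⁺` of them give a cover. -/
lemma covM_le_succ (hκ : ℵ₀ ≤ κ) (hbig : ∃ δ : Idx κ, lift κ < #(Iio δ.1 → Bool)) :
    covM κ ≤ Order.succ (lift κ) := by
  obtain ⟨δ, hδ⟩ := hbig
  obtain ⟨S, hS⟩ := le_mk_iff_exists_set.1 (Order.succ_le_of_lt hδ)
  refine hS ▸ covM_le_mk (M := fun w : S => {x | ∀ α < κ.ord, ¬ ShowsAt x α w.1})
    (fun w => (isNwd_setOf_forall_not_showsAt hκ δ.2 w.1).isKMeager hκ)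
    (eq_univ_of_forall fun x => ?_)
  by_contra! hx
  simp only [mem_iUnion, mem_ofPred_eq, not_exists, not_forall, not_not] at hx
  have hS_le : #S ≤ lift κ :=
    (mk_le_mk_of_subset fun w hw => by simpa using hx ⟨w, hw⟩).trans (mk_setOf_showsAt_le hκ x δ.2)
  exact (hS ▸ hS_le).not_gt (Order.lt_succ _)

end LargeLevels

section SmallLevels

open Cond

variable {κ : Cardinal.{0}}

lemma exists_lt_of_injective (hκ : ℵ₀ ≤ κ) {f : Idx κ → Idx κ} (hf : Function.Injective f)
    (ξ : Idx κ) : ∃ γ, ξ < f γ := by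
  by_contra! h
  have hξ : Order.succ ξ.1 < κ.ord := (isSuccLimit_ord hκ).succ_lt ξ.2
  have hle := mk_le_of_injective (f := fun γ =>
      (⟨f γ, Order.lt_succ_iff.2 (Subtype.coe_le_coe.2 (h γ))⟩ : Iio (Order.succ ξ.1)))
    fun γ γ' hγ => hf (Subtype.ext (congrArg Subtype.val hγ :))
  rw [mk_idx, Cardinal.mk_Iio_ordinal, Cardinal.lift_le] at hle
  exact hle.not_gt (lt_ord.1 hξ)

lemma exists_cofinal_enum (hκ : ℵ₀ ≤ κ) {α : Type 1} [Nonempty α] (hα : #α ≤ lift κ) :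
    ∃ e : Idx κ → α, ∀ a ξ, ∃ η, ξ < η ∧ e η = a := by
  have : Nonempty (Idx κ) := ⟨⟨0, (isSuccLimit_ord hκ).bot_lt⟩⟩
  obtain ⟨ι⟩ : Nonempty (α × Idx κ ↪ Idx κ) := by
    rw [← Cardinal.le_def, mk_idx]
    exact mk_prod_idx_le hκ hα
  refine ⟨fun η => (Function.invFun ι η).1, fun a ξ => ?_⟩
  obtain ⟨γ, hγ⟩ := exists_lt_of_injective hκ (f := fun γ => ι (a, γ))
    (fun γ γ' h => congrArg Prod.snd (ι.injective h)) ξ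
  exact ⟨ι (a, γ), hγ, by simp [Function.leftInverse_invFun ι.injective (a, γ)]⟩

noncomputable def Cond.ofNode (s : Σ δ : Idx κ, (Iio δ.1 → Bool)) : Cond :=
  ⟨s.1, fun β => if h : β < s.1.1 then s.2 ⟨β, h⟩ else false⟩

lemma exists_cofinal_dense_enum (hκ : ℵ₀ ≤ κ)
    (hsmall : ∀ δ : Idx κ, #(Iio δ.1 → Bool) ≤ lift κ) :
    ∃ e : Idx κ → Cond × Idx κ, (∀ η, (e η).1.len < κ.ord) ∧
      ∀ p : Cond, p.len < κ.ord → ∀ i ξ, ∃ η, ξ < η ∧ p ≤ (e η).1 ∧ (e η).2 = i := by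
  have h0 : (0 : Ordinal) < κ.ord := (isSuccLimit_ord hκ).bot_lt
  have : Nonempty ((Σ δ : Idx κ, (Iio δ.1 → Bool)) × Idx κ) :=
    ⟨⟨⟨0, h0⟩, fun _ => false⟩, ⟨0, h0⟩⟩
  have hnodes : #(Σ δ : Idx κ, (Iio δ.1 → Bool)) ≤ lift κ := by
    rw [mk_sigma]
    refine (sum_le_sum _ _ hsmall).trans ?_
    rw [sum_const', mk_idx]
    exact (mul_eq_self (aleph0_le_lift.2 hκ)).le
  obtain ⟨e, he⟩ := exists_cofinal_enum hκ (mk_prod_idx_le hκ hnodes)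
  refine ⟨fun η => (ofNode (e η).1, (e η).2), fun η => (e η).1.1.2, fun p hp i ξ => ?_⟩
  obtain ⟨η, hξη, hη⟩ := he (⟨⟨p.len, hp⟩, fun β => p.val β⟩, i) ξ
  refine ⟨η, hξη, ?_, by simp [hη]⟩
  simp only [hη]
  exact ⟨le_rfl, fun β hβ => by simp [ofNode, hβ]⟩

noncomputable def Cond.splice (p : Cond) (z : GenCantor κ) (q : Ordinal) : Cond :=
  ⟨q, fun β => if β < p.len then p.val β else if h : β < κ.ord then z ⟨β, h⟩ else false⟩

lemma Cond.le_splice {p : Cond} (z : GenCantor κ) {q : Ordinal} (h : p.len ≤ q) :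
    p ≤ p.splice z q :=
  ⟨h, fun _ hβ => if_pos hβ⟩

lemma Cond.splice_mono (p : Cond) (z : GenCantor κ) {q q' : Ordinal} (h : q ≤ q') :
    p.splice z q ≤ p.splice z q' :=
  ⟨h, fun _ _ => rfl⟩

variable (κ) in
def Escapes (p : Cond) (z : GenCantor κ) (N : Set (GenCantor κ)) : Prop :=
  ∃ q, p.len ≤ q ∧ q < κ.ord ∧ (p.splice z q).cylinder κ ∩ N = ∅

lemma isNwd_setOf_not_escapes {p : Cond} (hp : p.len < κ.ord) {N : Set (GenCantor κ)}
    (hN : IsNwd κ N) : IsNwd κ {z | ¬ Escapes κ p z N} := by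
  -- Extend `r`, overwritten by `p` below `p.len`, to some `t` missing `N`; restoring `r` below
  -- `r.len` gives a condition all of whose points `z` escape at height `t.len`.
  refine isNwd_iff.2 fun r hr => ?_
  obtain ⟨t, hrt, ht, htN⟩ := isNwd_iff.1 hN
    ⟨max r.len p.len, fun β => if β < p.len then p.val β else r.val β⟩ (max_lt hr hp)
  refine ⟨⟨t.len, fun β => if β < r.len then r.val β else t.val β⟩,
    ⟨(le_max_left _ _).trans hrt.1, fun β hβ => if_pos hβ⟩, ht,
    eq_empty_of_forall_notMem fun z ⟨hz, hz_esc⟩ => hz_esc ⟨t.len,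
      (le_max_right _ _).trans hrt.1, ht, subset_empty_iff.1 (htN ▸ inter_subset_inter_left _
        (cylinder_anti ⟨le_rfl, fun β hβ => ?_⟩))⟩⟩
  have hβκ : β < κ.ord := hβ.trans ht
  have hz_β : z ⟨β, hβκ⟩ = if β < r.len then r.val β else t.val β := hz ⟨β, hβκ⟩ hβ
  have ht_β : β < max r.len p.len → t.val β = if β < p.len then p.val β else r.val β := hrt.2 β
  show (if β < p.len then p.val β else if h : β < κ.ord then z ⟨β, h⟩ else false) = t.val β
  by_cases hβp : β < p.len
  · rw [if_pos hβp, ht_β (lt_max_of_lt_right hβp), if_pos hβp]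
  · rw [if_neg hβp, dif_pos hβκ, hz_β]
    by_cases hβr : β < r.len
    · rw [if_pos hβr, ht_β (lt_max_of_lt_left hβr), if_neg hβp]
    · rw [if_neg hβr]

lemma isNwd_setOf_forall_notMem_cylinder {e : Idx κ → Cond × Idx κ}
    (he : ∀ p : Cond, p.len < κ.ord → ∀ i ξ, ∃ η, ξ < η ∧ p ≤ (e η).1 ∧ (e η).2 = i)
    {r : Idx κ → Cond} (hr : ∀ η, (e η).1 ≤ r η) (hr_lt : ∀ η, (r η).len < κ.ord)
    (ξ i : Idx κ) : IsNwd κ {y | ∀ η, ξ < η → (e η).2 = i → y ∉ (r η).cylinder κ} := by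
  refine isNwd_iff.2 fun p hp => ?_
  obtain ⟨η, hξη, hpη, hi⟩ := he p hp i ξ
  exact ⟨r η, hpη.trans (hr η), hr_lt η,
    eq_empty_of_forall_notMem fun y ⟨hy, hyE⟩ => hyE η hξη hi hy⟩

theorem isKMeager_sUnion_of_small_levels (hκ : ℵ₀ ≤ κ)
    (hsmall : ∀ δ : Idx κ, #(Iio δ.1 → Bool) ≤ lift κ) {J : Set (Set (GenCantor κ))}
    (hJ : ∀ A ∈ J, IsKMeager κ A) (hb : #J < bK κ) (hc : #J < covM κ) :
    IsKMeager κ (⋃₀ J) := by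
  obtain ⟨e, he_lt, he⟩ := exists_cofinal_dense_enum hκ hsmall
  choose N hN hJN using fun A : J => hJ A A.2
  obtain ⟨z, hz⟩ := exists_forall_notMem_of_mk_lt_covM
    (M := fun A : J => ⋃ η, {z | ¬ Escapes κ (e η).1 z (N A (e η).2)})
    (fun A => ⟨_, fun η => isNwd_setOf_not_escapes (he_lt η) (hN A _), rfl⟩) hc
  simp only [mem_iUnion, mem_ofPred_eq, not_exists, not_not] at hz
  choose q _ hq_lt hq using hz
  obtain ⟨g, hg⟩ := exists_forall_evDom_of_mk_lt_bK (fun A η => ⟨q A η, hq_lt A η⟩) hb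
  let r η := (e η).1.splice z (max (g η).1 (e η).1.len)
  refine isKMeager_of_subset_iUnion (mk_prod_idx_le hκ mk_idx.le)
    (fun p => isNwd_setOf_forall_notMem_cylinder he (r := r)
      (fun η => le_splice z (le_max_right _ _)) (fun η => max_lt (g η).2 (he_lt η)) p.1 p.2)
    fun y ⟨A, hA, hy⟩ => ?_
  obtain ⟨i, hi⟩ := mem_iUnion.1 ((hJN ⟨A, hA⟩).subst (motive := (y ∈ ·)) hy)
  obtain ⟨ξ, hξ⟩ := hg ⟨A, hA⟩
  refine mem_iUnion.2 ⟨(ξ, i), fun η hξη hηi hyη => ?_⟩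
  have hle : (e η).1.splice z (q ⟨A, hA⟩ η) ≤ r η :=
    splice_mono _ z ((Subtype.coe_le_coe.2 (hξ η hξη).le).trans (le_max_left _ _))
  exact (hq ⟨A, hA⟩ η).subset ⟨cylinder_anti hle hyη, hηi ▸ hi⟩

end SmallLevels

theorem min_le_addM_general (κ : Cardinal.{0})
    (hreg : κ.IsRegular) :
    min (bK κ) (covM κ) ≤ addM κ := by
  have hκ := hreg.aleph0_le
  refine le_csInf ⟨_, range fun x : GenCantor κ => {x},
    forall_mem_range.2 fun x => (isNwd_singleton hκ x).isKMeager hκ,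
    by simpa [iUnion_of_singleton] using not_isKMeager_univ hreg, rfl⟩ ?_
  rintro _ ⟨J, hJ, hJ_not, rfl⟩
  by_contra! hJ_lt
  refine hJ_not ?_
  by_cases hsmall : ∀ δ : Idx κ, #(Iio δ.1 → Bool) ≤ lift κ
  · exact isKMeager_sUnion_of_small_levels hκ hsmall hJ (hJ_lt.trans_le (min_le_left _ _))
      (hJ_lt.trans_le (min_le_right _ _))
  · push Not at hsmall
    have hJ_le := (hJ_lt.trans_le (min_le_right _ _)).trans_le (covM_le_succ hκ hsmall)
    exact isKMeager_sUnion_of_mk_le hκ hJ (Order.lt_succ_iff.1 hJ_le)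

theorem min_le_addM (κ : Cardinal.{0})
    (hreg : κ.IsRegular) (hunc : Cardinal.aleph0 < κ) :
    min (bK κ) (covM κ) ≤ addM κ :=
  min_le_addM_general κ hreg

end GenCichon
end

section
/- Let κ be a weakly inaccessible cardinal and let h ∈ κ^κ with lim_{α→κ} h(α) = κ. Then 𝔟_h(∈*) ≤ 𝔟_h(p∈*) ≤ 𝔟_κ and 𝔡_κ ≤ 𝔡_h(p∈*) ≤ 𝔡_h(∈*). -/
/-! A total `h`-slalom is a partial one with full domain, which gives the outer inequalities.
For the inner ones, regularity of `κ` makes every set of size `< κ` bounded. A partial slalom `φ`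
thus yields `g_φ ∈ κ^κ`, with `g_φ(α)` a strict bound of `φ(δ)` for some `δ ≥ α` in the domain
of `φ`; and every `f` has a running bound `f̂`, with `f(β) < f̂(δ)` whenever `β ≤ δ`. If `φ`
localizes `f̂`, then `f(α) < f̂(δ) < g_φ(α)` for almost all `α`, so `g_φ` dominates `f`. Hence
`f ↦ f̂` turns unbounded families into families no partial slalom localizes, and `φ ↦ g_φ` turns
localizing families into dominating ones.

Since `sInf ∅ = 0`, each inequality also needs the invariant on the right to be witnessed by
some family. For `𝔡_h(∈*)` this is where `h → κ` is used: `f` is localized by the slalom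
`α ↦ swap 0 (f α) '' [0, h α)`. -/

namespace GenCichon

open Cardinal Set Ordinal

theorem csInf_le_csInf_of_forall_exists_le {α : Type*} [ConditionallyCompleteLinearOrderBot α]
    {s t : Set α} (ht : t.Nonempty) (h : ∀ c ∈ t, ∃ d ∈ s, d ≤ c) : sInf s ≤ sInf t :=
  le_csInf ht fun c hc =>
    let ⟨_, hd, hdc⟩ := h c hc
    (csInf_le (OrderBot.bddBelow s) hd).trans hdc

variable {κ : Cardinal.{0}}

theorem mk_Iio_idx (b : Idx κ) : #(Iio b) = lift.{1} b.1.card := by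
  rw [← mk_image_eq Subtype.val_injective, image_subtype_val_Iio_Iio, Cardinal.mk_Iio_ordinal]

theorem mk_lt_of_forall_lt {T : Set (Idx κ)} (b : Idx κ) (hT : ∀ t ∈ T, t < b) :
    #T < lift.{1} κ :=
  calc #T ≤ #(Iio b) := mk_le_mk_of_subset hT
    _ = lift.{1} b.1.card := mk_Iio_idx b
    _ < lift.{1} κ := lift_lt.2 (lt_ord.1 b.2)

theorem isCofinal_of_mk_eq {D : Set (Idx κ)} (hD : #D = lift.{1} κ) : IsCofinal D := by
  by_contra hD'
  obtain ⟨b, hb⟩ := not_isCofinal_iff.1 hD'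
  exact (mk_lt_of_forall_lt b hb).ne hD

theorem exists_forall_lt_of_mk_lt (hreg : κ.IsRegular) {T : Set (Idx κ)}
    (hT : #T < lift.{1} κ) : ∃ b : Idx κ, ∀ t ∈ T, t < b := by
  refine not_isCofinal_iff.1 fun hcof => (Order.cof_le hcof).not_gt ?_
  rwa [Ordinal.cof_Iio, ← Ordinal.lift_cof, hreg.cof_ord]

theorem exists_idx_gt (hreg : κ.IsRegular) (α : Idx κ) : ∃ β : Idx κ, α < β :=
  have := (isSuccLimit_ord hreg.aleph0_le).isSuccPrelimit.noMaxOrder_Iio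
  exists_gt α

theorem mk_Iic_idx_lt (hreg : κ.IsRegular) (α : Idx κ) : #(Iic α) < lift.{1} κ :=
  let ⟨β, hβ⟩ := exists_idx_gt hreg α
  mk_lt_of_forall_lt β fun _ ht => lt_of_le_of_lt ht hβ

theorem not_evDom_self (hreg : κ.IsRegular) (g : GenBaire κ) : ¬ EvDom κ g g := by
  rintro ⟨α, hα⟩
  obtain ⟨β, hβ⟩ := exists_idx_gt hreg α
  exact lt_irrefl _ (hα β hβ)

noncomputable def strictUpperBound (hreg : κ.IsRegular) (T : Set (Idx κ))
    (hT : #T < lift.{1} κ) : Idx κ :=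
  (exists_forall_lt_of_mk_lt hreg hT).choose

theorem lt_strictUpperBound (hreg : κ.IsRegular) {T : Set (Idx κ)} (hT : #T < lift.{1} κ)
    {t : Idx κ} (ht : t ∈ T) : t < strictUpperBound hreg T hT :=
  (exists_forall_lt_of_mk_lt hreg hT).choose_spec t ht

noncomputable def runningBound (hreg : κ.IsRegular) (f : GenBaire κ) : GenBaire κ :=
  fun α => strictUpperBound hreg (f '' Iic α) (mk_image_le.trans_lt (mk_Iic_idx_lt hreg α))

theorem lt_runningBound (hreg : κ.IsRegular) (f : GenBaire κ) {β α : Idx κ} (hβα : β ≤ α) :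
    f β < runningBound hreg f α :=
  lt_strictUpperBound hreg _ (mem_image_of_mem f hβα)

theorem exists_isSlalom_localizes (hreg : κ.IsRegular) {h : GenBaire κ} (hh : TendsToTop κ h)
    (f : GenBaire κ) : ∃ φ, IsSlalom κ h φ ∧ Localizes κ φ f := by
  let z : Idx κ := ⟨0, ord_pos.2 hreg.pos⟩
  refine ⟨fun α => Equiv.swap z (f α) '' Iio (h α), fun α => ?_, ?_⟩
  · rw [mk_image_eq (Equiv.injective _), mk_Iio_idx]
  · obtain ⟨o, hzo⟩ := exists_idx_gt hreg z
    obtain ⟨α₀, hα₀⟩ := hh o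
    refine mk_lt_of_forall_lt α₀ fun α hα => lt_of_not_ge fun hα₀α => hα ?_
    exact ⟨z, hzo.trans_le (hα₀ α hα₀α), Equiv.swap_apply_left z (f α)⟩

def toPartialSlalom {h : GenBaire κ} (φ : Idx κ → Set (Idx κ)) (hφ : IsSlalom κ h φ) :
    PartialSlalom κ h where
  dom := univ
  dom_card := by simp
  fn := φ
  fn_card α _ := hφ α
  eq_empty_of_not_mem _ hα := absurd (mem_univ _) hα

theorem pLocalizes_toPartialSlalom_iff {h : GenBaire κ} {φ : Idx κ → Set (Idx κ)}
    (hφ : IsSlalom κ h φ) (f : GenBaire κ) :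
    PLocalizes κ (toPartialSlalom φ hφ) f ↔ Localizes κ φ f := by
  simp [PLocalizes, Localizes, toPartialSlalom]

namespace PartialSlalom

variable {h : GenBaire κ} (φ : PartialSlalom κ h)

theorem mk_fn_lt (α : Idx κ) : #(φ.fn α) < lift.{1} κ := by
  by_cases hα : α ∈ φ.dom
  · rw [φ.fn_card α hα]
    exact lift_lt.2 (lt_ord.1 (h α).2)
  · exact mk_lt_of_forall_lt α (by simp [φ.eq_empty_of_not_mem α hα])

noncomputable def next (α : Idx κ) : Idx κ :=
  (isCofinal_of_mk_eq φ.dom_card α).choose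

theorem next_mem (α : Idx κ) : φ.next α ∈ φ.dom :=
  (isCofinal_of_mk_eq φ.dom_card α).choose_spec.1

theorem le_next (α : Idx κ) : α ≤ φ.next α :=
  (isCofinal_of_mk_eq φ.dom_card α).choose_spec.2

noncomputable def bound (hreg : κ.IsRegular) : GenBaire κ :=
  fun α => strictUpperBound hreg (φ.fn (φ.next α)) (φ.mk_fn_lt _)

noncomputable def escape (hreg : κ.IsRegular) : GenBaire κ :=
  fun α => strictUpperBound hreg (φ.fn α) (φ.mk_fn_lt α)

theorem not_pLocalizes_escape (hreg : κ.IsRegular) : ¬ PLocalizes κ φ (φ.escape hreg) := by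
  have hbad : {α | α ∈ φ.dom ∧ φ.escape hreg α ∉ φ.fn α} = φ.dom :=
    sep_eq_self_iff_mem_true.2 fun α _ hmem =>
      lt_irrefl _ (lt_strictUpperBound hreg (φ.mk_fn_lt α) hmem)
  rw [PLocalizes, hbad, φ.dom_card]
  exact lt_irrefl _

theorem evDom_bound_of_pLocalizes (hreg : κ.IsRegular) {f : GenBaire κ}
    (hf : PLocalizes κ φ (runningBound hreg f)) : EvDom κ f (φ.bound hreg) := by
  obtain ⟨b, hb⟩ := exists_forall_lt_of_mk_lt hreg hf
  refine ⟨b, fun β hbβ => ?_⟩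
  have hmem : runningBound hreg f (φ.next β) ∈ φ.fn (φ.next β) := by
    by_contra hnot
    exact (hbβ.trans_le (φ.le_next β)).not_gt (hb _ ⟨φ.next_mem β, hnot⟩)
  exact (lt_runningBound hreg f (φ.le_next β)).trans (lt_strictUpperBound hreg _ hmem)

end PartialSlalom

theorem bLoc_le_bPLoc (hreg : κ.IsRegular) (h : GenBaire κ) : bLoc κ h ≤ bPLoc κ h := by
  refine csInf_le_csInf_of_forall_exists_le
    ⟨_, univ, fun φ => ⟨_, mem_univ _, φ.not_pLocalizes_escape hreg⟩, rfl⟩ ?_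
  rintro _ ⟨F, hF, rfl⟩
  refine ⟨#F, ⟨F, fun φ hφ => ?_, rfl⟩, le_rfl⟩
  obtain ⟨f, hfF, hf⟩ := hF (toPartialSlalom φ hφ)
  exact ⟨f, hfF, mt (pLocalizes_toPartialSlalom_iff hφ f).2 hf⟩

theorem bPLoc_le_bK (hreg : κ.IsRegular) (h : GenBaire κ) : bPLoc κ h ≤ bK κ := by
  refine csInf_le_csInf_of_forall_exists_le
    ⟨_, univ, fun g => ⟨g, mem_univ g, not_evDom_self hreg g⟩, rfl⟩ ?_
  rintro _ ⟨F, hF, rfl⟩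
  refine ⟨_, ⟨runningBound hreg '' F, fun φ => ?_, rfl⟩, mk_image_le⟩
  obtain ⟨f, hfF, hf⟩ := hF (φ.bound hreg)
  exact ⟨_, mem_image_of_mem _ hfF, mt (φ.evDom_bound_of_pLocalizes hreg) hf⟩

theorem dK_le_dPLoc (hreg : κ.IsRegular) {h : GenBaire κ} (hh : TendsToTop κ h) :
    dK κ ≤ dPLoc κ h := by
  refine csInf_le_csInf_of_forall_exists_le ⟨_, univ, fun f => ?_, rfl⟩ ?_
  · obtain ⟨φ, hφ, hf⟩ := exists_isSlalom_localizes hreg hh f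
    exact ⟨_, mem_univ _, (pLocalizes_toPartialSlalom_iff hφ f).2 hf⟩
  rintro _ ⟨Φ, hΦ, rfl⟩
  refine ⟨_, ⟨(fun φ => φ.bound hreg) '' Φ, fun f => ?_, rfl⟩, mk_image_le⟩
  obtain ⟨φ, hφΦ, hφ⟩ := hΦ (runningBound hreg f)
  exact ⟨_, mem_image_of_mem _ hφΦ, φ.evDom_bound_of_pLocalizes hreg hφ⟩

theorem dPLoc_le_dLoc (hreg : κ.IsRegular) {h : GenBaire κ} (hh : TendsToTop κ h) :
    dPLoc κ h ≤ dLoc κ h := by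
  refine csInf_le_csInf_of_forall_exists_le
    ⟨_, {φ | IsSlalom κ h φ}, fun _ hφ => hφ, exists_isSlalom_localizes hreg hh, rfl⟩ ?_
  rintro _ ⟨Φ, hΦ, hloc, rfl⟩
  let ψ : Φ → PartialSlalom κ h := fun φ => toPartialSlalom φ.1 (hΦ φ.1 φ.2)
  refine ⟨_, ⟨range ψ, fun f => ?_, rfl⟩, mk_range_le⟩
  obtain ⟨φ, hφΦ, hφ⟩ := hloc f
  exact ⟨_, mem_range_self ⟨φ, hφΦ⟩, (pLocalizes_toPartialSlalom_iff _ f).2 hφ⟩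

theorem loc_between_general (κ : Cardinal.{0})
    (hreg : κ.IsRegular)
    (h : GenBaire κ) (hh : TendsToTop κ h) :
    (bLoc κ h ≤ bPLoc κ h ∧ bPLoc κ h ≤ bK κ) ∧
    (dK κ ≤ dPLoc κ h ∧ dPLoc κ h ≤ dLoc κ h) :=
  ⟨⟨bLoc_le_bPLoc hreg h, bPLoc_le_bK hreg h⟩, ⟨dK_le_dPLoc hreg hh, dPLoc_le_dLoc hreg hh⟩⟩

theorem loc_between (κ : Cardinal.{0})
    (hreg : κ.IsRegular) (hunc : Cardinal.aleph0 < κ)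
    (hlim : ∀ μ < κ, Order.succ μ < κ)
    (h : GenBaire κ) (hh : TendsToTop κ h) :
    (bLoc κ h ≤ bPLoc κ h ∧ bPLoc κ h ≤ bK κ) ∧
    (dK κ ≤ dPLoc κ h ∧ dPLoc κ h ≤ dLoc κ h) :=
  loc_between_general κ hreg h hh

end GenCichon
end
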